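/- arXiv:2302.08211 — 2 statements merged into one kernel-verified Lean document; each statement's English description precedes it below -/
import Mathlib

section
/- Let μ = (μ_1,...,μ_n) be a composition, and for m ≥ 0 and 1 ≤ i ≤ n+m set α_μ^{(m)}(i) = q^{(μ*0^m)_i} t^{1 - β_{μ*0^m}(i)}. Then the sequence t^{n+m} α_μ^{(m)}(i) converges in the t-adic topology on Q(q,t) as m → ∞, with limit: q^{μ_i} t^{n+1-β_μ(i)} if i ≤ n and μ_i ≠ 0, and 0 otherwise (i.e., if i ≤ n with μ_i = 0, or if i > n). -/
/-!
Appending zeros to `μ` changes `β(i)` in a transparent way. If `μ_i ≠ 0`, each appended zero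
lies to the right of `i` and is smaller than `μ_i`, so `β_{μ*0^m}(i) = β_μ(i) + m`; the factor
`t^{n+m}` cancels this exactly and the sequence is constant. If `μ_i = 0`, nothing to the right
of `i` is smaller than `μ_i`, so `β(i) ≤ i + 1` for all `m`; the `t`-adic valuation of the
monomial `t^{n+m} α(i)` is then at least `n + m - i`, which tends to infinity.
-/

open scoped Multiplicative
open scoped WithZero
/-- `β_ν(i)`, 0-indexed. -/
def betaComp (N : ℕ) (ν : ℕ → ℕ) (i : ℕ) : ℕ :=
  ((Finset.range N).filter (fun j => j ≤ i ∧ ν j ≤ ν i)).card +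
    ((Finset.range N).filter (fun j => i < j ∧ ν j < ν i)).card

/-- The field `ℚ(q,t)`, realized as rational functions in `t` over `ℚ(q)`. -/
abbrev Kqt : Type := RatFunc (RatFunc ℚ)

/-- The variable `q` of `ℚ(q,t)`. -/
noncomputable def qq : Kqt := RatFunc.C RatFunc.X

/-- The variable `t` of `ℚ(q,t)`. -/
noncomputable def tt : Kqt := RatFunc.X

/-- The `t`-adic valuation on `ℚ(q,t)` (valued in `ℤₘ₀`); `v(t) = ofAdd (-1)`. -/
noncomputable def tVal : Valuation Kqt ℤᵐ⁰ :=
  (Polynomial.idealX (RatFunc ℚ)).valuation Kqt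

open Finset WithZero

section Beta

variable (ν : ℕ → ℕ) (i : ℕ)

theorem betaComp_eq_sum (N : ℕ) :
    betaComp N ν i = ∑ j ∈ range N,
      ((if j ≤ i ∧ ν j ≤ ν i then 1 else 0) + (if i < j ∧ ν j < ν i then 1 else 0)) := by
  rw [betaComp, sum_add_distrib, card_filter, card_filter]

theorem betaComp_add {N : ℕ} (hi : i < N) (m : ℕ) :
    betaComp (N + m) ν i = betaComp N ν i + #{k ∈ range m | ν (N + k) < ν i} := by
  rw [betaComp_eq_sum, betaComp_eq_sum, sum_range_add, card_filter]
  congr 1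
  refine sum_congr rfl fun k _ => ?_
  simp only [show ¬ N + k ≤ i by omega, show i < N + k by omega, false_and, true_and,
    if_false, zero_add]

theorem betaComp_add_of_ne_zero {N : ℕ} (hν : ∀ j, N ≤ j → ν j = 0) (hi : i < N)
    (hνi : ν i ≠ 0) (m : ℕ) : betaComp (N + m) ν i = betaComp N ν i + m := by
  rw [betaComp_add ν i hi, filter_true_of_mem fun k _ => by rw [hν _ (N.le_add_right k)]; omega,
    card_range]

theorem betaComp_le_of_eq_zero (N : ℕ) (hνi : ν i = 0) : betaComp N ν i ≤ i + 1 := by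
  have hright : {j ∈ range N | i < j ∧ ν j < ν i} = ∅ :=
    filter_false_of_mem fun j _ => by omega
  rw [betaComp, hright, card_empty, add_zero, ← card_range (i + 1)]
  exact card_le_card fun j hj => by simp only [mem_filter, mem_range] at hj ⊢; omega

end Beta

theorem Polynomial.valuation_idealX_C {K : Type*} [Field K] {c : K} (hc : c ≠ 0) :
    (idealX K).valuation (RatFunc K) (RatFunc.C c) = 1 := by
  rw [← RatFunc.algebraMap_C, IsDedekindDomain.HeightOneSpectrum.valuation_eq_one_iff_notMem]
  exact fun h => (idealX K).isPrime.ne_top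
    (Ideal.eq_top_of_isUnit_mem _ h (Polynomial.isUnit_C.mpr hc.isUnit))

theorem tt_ne_zero : tt ≠ 0 := RatFunc.X_ne_zero

theorem tVal_qq_pow_mul_tt_zpow (a : ℕ) (k : ℤ) : tVal (qq ^ a * tt ^ k) = exp (-k) := by
  rw [map_mul, map_pow, map_zpow₀, tVal, qq, tt, Polynomial.valuation_idealX_C RatFunc.X_ne_zero,
    Polynomial.valuation_X_eq_neg_one, one_pow, one_mul, ← exp_zsmul, smul_neg, zsmul_one,
    Int.cast_id]

theorem tt_pow_mul_qq_pow_mul_tt_zpow (N a : ℕ) (k : ℤ) :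
    tt ^ N * (qq ^ a * tt ^ k) = qq ^ a * tt ^ ((N : ℤ) + k) := by
  rw [← zpow_natCast tt N, mul_left_comm, ← zpow_add₀ tt_ne_zero]

/-- Let `μ` be a composition of length `n`, encoded as `μ : ℕ → ℕ` vanishing at
indices `≥ n` (so the same function encodes each `μ * 0ᵐ`).  For each index `i` (0-indexed)
set `α_μ⁽ᵐ⁾(i) = q^{(μ*0ᵐ)_i} t^{1 - β_{μ*0ᵐ}(i)}`.  Then `t^{n+m} α_μ⁽ᵐ⁾(i)` converges in
the `t`-adic topology as `m → ∞`, with limit `q^{μ_i} t^{n+1-β_μ(i)}` if `i < n` and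
`μ_i ≠ 0`, and limit `0` otherwise. -/
theorem tadic_limit_of_cherednik_weights
    (n : ℕ) (μ : ℕ → ℕ) (hμ : ∀ j, n ≤ j → μ j = 0) (i : ℕ) :
    ∀ γ : ℤᵐ⁰, γ ≠ 0 → ∃ M : ℕ, ∀ m ≥ M,
      tVal ((tt ^ (n + m) * (qq ^ μ i * tt ^ ((1 : ℤ) - betaComp (n + m) μ i))) -
        (if i < n ∧ μ i ≠ 0 then qq ^ μ i * tt ^ ((n : ℤ) + 1 - betaComp n μ i) else 0)) < γ := by
  intro γ hγ
  by_cases hc : i < n ∧ μ i ≠ 0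
  · refine ⟨0, fun m _ => ?_⟩
    have hexp : ((n + m : ℕ) : ℤ) + (1 - ((betaComp n μ i + m : ℕ) : ℤ)) =
        n + 1 - betaComp n μ i := by push_cast; ring
    rw [if_pos hc, tt_pow_mul_qq_pow_mul_tt_zpow, betaComp_add_of_ne_zero μ i hμ hc.1 hc.2, hexp,
      sub_self, map_zero]
    exact zero_lt_iff.mpr hγ
  · have hμi : μ i = 0 := by
      by_contra h
      exact hc ⟨not_le.mp fun hni => h (hμ i hni), h⟩
    refine ⟨i + 1 + (-log γ).toNat, fun m hm => ?_⟩
    rw [if_neg hc, sub_zero, tt_pow_mul_qq_pow_mul_tt_zpow, tVal_qq_pow_mul_tt_zpow,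
      ← exp_log hγ, exp_lt_exp]
    have := betaComp_le_of_eq_zero μ i (n + m) hμi
    omega
end

section
/- In the double affine Hecke algebra H_n, the element ω_n = T_{n-1}^{-1}···T_1^{-1}Y_1^{-1} satisfies ω_n^{-1} T_{n-1}^{-1}···T_r^{-1} X_r = q t^{-(n-r)} X_1 ω_n^{-1} T_{n-1}···T_r for 1 ≤ r ≤ n-1. -/
/-- `T r T (r+1) ⋯ T (n-1)` (ascending product), as a unit. -/
def ascT {A : Type*} [Monoid A] (T : ℕ → Aˣ) (r n : ℕ) : Aˣ :=
  ((List.range' r (n - r)).map T).prod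

/-- `T (n-1) ⋯ T (r+1) T r` (descending product), as a unit. -/
def descT {A : Type*} [Monoid A] (T : ℕ → Aˣ) (r n : ℕ) : Aˣ :=
  ((List.range' r (n - r)).map T).reverse.prod

/-!
`ω⁻¹ = Y 1 * T 1 ⋯ T (n-1)` acts by conjugation as a cyclic shift. It sends `T i` to `T (i+1)`
(braid relations), hence, starting from relation (iv) and using the recursion
`X (i+1) = t (T i)⁻¹ X i (T i)⁻¹`, it sends `X i` to `X (i+1)` for `i < n`. Since
`X 1 ⋯ X n` commutes with every `T i`, relation (v) says that conjugation by `ω⁻¹` multiplies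
`X 1 ⋯ X n` by `q`, and comparing with the shift forces `ω⁻¹ X n = q X 1 ω⁻¹`. The claim follows
because `(T r ⋯ T (n-1))⁻¹ X r = t^{-(n-r)} X n T (n-1) ⋯ T r`.
-/

section Products

variable {M : Type*} [Monoid M] (T : ℕ → Mˣ)

theorem ascT_mul_ascT {r m n : ℕ} (hrm : r ≤ m) (hmn : m ≤ n) :
    ascT T r m * ascT T m n = ascT T r n := by
  obtain ⟨k, rfl⟩ := Nat.exists_eq_add_of_le hrm
  obtain ⟨l, rfl⟩ := Nat.exists_eq_add_of_le hmn
  rw [ascT, ascT, ascT, show r + k - r = k by omega, show r + k + l - (r + k) = l by omega,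
    show r + k + l - r = k + l by omega, ← List.range'_append_1, List.map_append, List.prod_append]

theorem descT_mul_descT {r m n : ℕ} (hrm : r ≤ m) (hmn : m ≤ n) :
    descT T m n * descT T r m = descT T r n := by
  obtain ⟨k, rfl⟩ := Nat.exists_eq_add_of_le hrm
  obtain ⟨l, rfl⟩ := Nat.exists_eq_add_of_le hmn
  rw [descT, descT, descT, show r + k - r = k by omega, show r + k + l - (r + k) = l by omega,
    show r + k + l - r = k + l by omega, ← List.range'_append_1, List.map_append,
    List.reverse_append, List.prod_append]

theorem ascT_succ {r m : ℕ} (h : r ≤ m) : ascT T r (m + 1) = ascT T r m * T m := by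
  rw [← ascT_mul_ascT T h m.le_succ]
  simp [ascT]

theorem descT_succ {r m : ℕ} (h : r ≤ m) : descT T r (m + 1) = T m * descT T r m := by
  rw [← descT_mul_descT T h m.le_succ]
  simp [descT]

theorem commute_ascT {z : M} {a b : ℕ} (h : ∀ i, a ≤ i → i < b → Commute (T i : M) z) :
    Commute (ascT T a b : M) z := by
  rw [ascT, ← Units.coeHom_apply, map_list_prod, List.map_map]
  refine Commute.list_prod_left _ _ ?_
  simp only [List.mem_map, List.mem_range'_1, Function.comp_apply, Units.coeHom_apply]
  rintro _ ⟨i, ⟨hai, hib⟩, rfl⟩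
  exact h i hai (by omega)

theorem semiconjBy_ascT {a b i : ℕ} (hai : a ≤ i) (hib : i + 2 ≤ b)
    (hbraid : (T i : M) * T (i + 1) * T i = T (i + 1) * T i * T (i + 1))
    (hfar : ∀ j k, a ≤ j → j + 1 < k → k < b → Commute (T j : M) (T k)) :
    SemiconjBy (ascT T a b : M) (T i) (T (i + 1)) := by
  have hbraid' : T i * T (i + 1) * T i = T (i + 1) * T i * T (i + 1) := Units.ext hbraid
  have hsplit : ascT T a b = ascT T a i * (T i * T (i + 1)) * ascT T (i + 2) b := by
    rw [← ascT_mul_ascT T hai (by omega : i ≤ b), ← ascT_mul_ascT T (by omega : i ≤ i + 2) hib]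
    simp [ascT, List.range'_succ, mul_assoc]
  have hleft : Commute (T (i + 1)) (ascT T a i) := Commute.units_of_val <|
    (commute_ascT T fun j hj hji => hfar j (i + 1) hj (by omega) (by omega)).symm
  have hright : Commute (T i) (ascT T (i + 2) b) := Commute.units_of_val <|
    (commute_ascT T fun k hk hkb => (hfar i k hai (by omega) hkb).symm).symm
  refine SemiconjBy.units_val ?_
  calc ascT T a b * T i
      = ascT T a i * (T i * T (i + 1) * T i) * ascT T (i + 2) b := by
        rw [hsplit, mul_assoc _ (ascT T (i + 2) b), ← hright.eq]; group
    _ = ascT T a i * T (i + 1) * (T i * T (i + 1)) * ascT T (i + 2) b := by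
        rw [hbraid']; group
    _ = T (i + 1) * ascT T a b := by rw [← hleft.eq, hsplit]; group

theorem SemiconjBy.prod_range' {p : M} {x : ℕ → M} {a k : ℕ}
    (h : ∀ i, a ≤ i → i < a + k → SemiconjBy p (x i) (x (i + 1))) :
    SemiconjBy p ((List.range' a k).map x).prod ((List.range' (a + 1) k).map x).prod := by
  induction k generalizing a with
  | zero => simp [SemiconjBy.one_right]
  | succ k ih =>
    simp only [List.range'_succ, List.map_cons, List.prod_cons]
    exact (h a le_rfl (by omega)).mul_right (ih fun i hi hik => h i (by omega) (by omega))

theorem Commute.prod_range'_of_pair {u : M} {x : ℕ → M} {a k i : ℕ}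
    (hai : a ≤ i) (hik : i + 2 ≤ a + k) (hpair : Commute u (x i * x (i + 1)))
    (hother : ∀ j, a ≤ j → j < a + k → j ≠ i → j ≠ i + 1 → Commute u (x j)) :
    Commute u ((List.range' a k).map x).prod := by
  have hout : ∀ l : List ℕ, (∀ j ∈ l, a ≤ j ∧ j < a + k ∧ j ≠ i ∧ j ≠ i + 1) →
      Commute u (l.map x).prod := fun l hl =>
    Commute.list_prod_right _ _ <| by
      simp only [List.mem_map]
      rintro _ ⟨j, hj, rfl⟩
      obtain ⟨h1, h2, h3, h4⟩ := hl j hj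
      exact hother j h1 h2 h3 h4
  obtain ⟨c, rfl⟩ := Nat.exists_eq_add_of_le hai
  obtain ⟨d, rfl⟩ : ∃ d, k = c + (2 + d) := ⟨k - c - 2, by omega⟩
  have hmid : Commute u ((List.range' (a + c) 2).map x).prod := by
    simpa [List.range'_succ] using hpair
  rw [← List.range'_append_1, ← List.range'_append_1, List.map_append, List.map_append,
    List.prod_append, List.prod_append]
  refine (hout _ fun j hj => ?_).mul_right (hmid.mul_right (hout _ fun j hj => ?_))
  · simp only [List.mem_range'_1] at hj; omega
  · simp only [List.mem_range'_1] at hj; omega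

end Products

section Algebra

variable {K : Type*} [CommSemiring K] {A : Type*} [Semiring A] [Algebra K A]

theorem inv_ascT_mul_eq_smul (s : K) (T : ℕ → Aˣ) (X : ℕ → A) {r m : ℕ} (hrm : r ≤ m)
    (hTX : ∀ i, r ≤ i → i < m → (↑(T i)⁻¹ : A) * X i * ↑(T i)⁻¹ = s • X (i + 1)) :
    (↑(ascT T r m)⁻¹ : A) * X r = s ^ (m - r) • (X m * descT T r m) := by
  induction m, hrm using Nat.le_induction with
  | base => simp [ascT, descT]
  | succ m hrm ih =>
    have hstep : (↑(T m)⁻¹ : A) * X m = s • (X (m + 1) * T m) := by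
      rw [← smul_mul_assoc, ← hTX m hrm (by omega), Units.inv_mul_cancel_right]
    rw [ascT_succ T hrm, descT_succ T hrm, mul_inv_rev, Units.val_mul, mul_assoc,
      ih fun i hi him => hTX i hi (by omega), mul_smul_comm, ← mul_assoc, hstep,
      show m + 1 - r = m - r + 1 by omega, pow_succ, mul_smul]
    simp [mul_assoc]

theorem commute_mul_of_eq_smul (t : K) {u : Aˣ} {x y : A}
    (hy : y = t • (↑u⁻¹ * x * ↑u⁻¹)) (hxy : Commute x y) : Commute (u : A) (x * y) := by
  rw [Commute, SemiconjBy]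
  conv_lhs => rw [hxy.eq]
  subst hy
  simp [mul_assoc]

theorem SemiconjBy.smul_conj (t : K) {p : A} {u v : Aˣ} {x y : A}
    (hu : SemiconjBy p u v) (hx : SemiconjBy p x y) :
    SemiconjBy p (t • (↑u⁻¹ * x * ↑u⁻¹)) (t • (↑v⁻¹ * y * ↑v⁻¹)) := by
  have h := (hu.units_inv_right.mul_right hx).mul_right hu.units_inv_right
  rw [SemiconjBy, mul_smul_comm, h.eq, smul_mul_assoc]

end Algebra

section ShiftOperator

theorem semiconjBy_mul_ascT_X {M : Type*} [Monoid M] (T : ℕ → Mˣ) (y : Mˣ) {x x' : M} {n : ℕ}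
    (hn : 2 ≤ n) (hyx : (y : M) * T 1 * x = x' * y * T 1)
    (hx : ∀ j, 2 ≤ j → j < n → Commute (T j : M) x) :
    SemiconjBy ((y * ascT T 1 n : Mˣ) : M) x x' := by
  have hT1 : ascT T 1 n = T 1 * ascT T 2 n := by
    rw [← ascT_mul_ascT T (by omega : 1 ≤ 2) hn]
    simp [ascT]
  rw [hT1, ← mul_assoc, Units.val_mul]
  exact SemiconjBy.mul_left (by simpa [SemiconjBy, mul_assoc] using hyx)
    (commute_ascT T fun j hj hjn => hx j hj hjn)

variable {K : Type*} [CommSemiring K] {A : Type*} [Semiring A] [Algebra K A]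

theorem semiconjBy_X_of_semiconjBy_T (t : K) (T : ℕ → Aˣ) (X : ℕ → A) {p : A} {a n : ℕ}
    (hX : ∀ i, a ≤ i → i < n → X (i + 1) = t • (↑(T i)⁻¹ * X i * ↑(T i)⁻¹))
    (hT : ∀ i, a ≤ i → i + 2 ≤ n → SemiconjBy p (T i) (T (i + 1)))
    (ha : SemiconjBy p (X a) (X (a + 1))) :
    ∀ i, a ≤ i → i < n → SemiconjBy p (X i) (X (i + 1)) := by
  intro i hai
  induction i, hai using Nat.le_induction with
  | base => exact fun _ => ha
  | succ i hai ih =>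
    intro hin
    rw [hX i hai (by omega), hX (i + 1) (by omega) hin]
    exact (hT i hai (by omega)).smul_conj t (ih (by omega))

theorem semiconjBy_last_of_semiconjBy_prod (q : K) (X : ℕ → Aˣ) {p : A} {n : ℕ} (hn : 1 ≤ n)
    (hX1 : ∀ j, Commute (X 1 : A) (X j))
    (hshift : ∀ i, 1 ≤ i → i < n → SemiconjBy p (X i) (X (i + 1)))
    (hprod : SemiconjBy p ((List.range' 1 n).map fun i => (X i : A)).prod
      (q • ((List.range' 1 n).map fun i => (X i : A)).prod)) :
    SemiconjBy p (X n) (q • (X 1 : A)) := by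
  obtain ⟨m, rfl⟩ : ∃ m, n = m + 1 := ⟨n - 1, by omega⟩
  set Q := ((List.range' 2 m).map X).prod
  have hQ : (Q : A) = ((List.range' 2 m).map fun i => (X i : A)).prod := by
    rw [← Units.coeHom_apply, map_list_prod, List.map_map]
    rfl
  have hfront : ((List.range' 1 (m + 1)).map fun i => (X i : A)).prod = X 1 * Q := by
    rw [hQ, List.range'_succ, List.map_cons, List.prod_cons]
  have hback : ((List.range' 1 (m + 1)).map fun i => (X i : A)).prod =
      ((List.range' 1 m).map fun i => (X i : A)).prod * X (m + 1) := by
    rw [List.range'_1_concat, List.map_append, List.prod_append, add_comm 1 m]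
    simp
  have hpQ : SemiconjBy p ((List.range' 1 m).map fun i => (X i : A)).prod Q := by
    rw [hQ]
    exact SemiconjBy.prod_range' fun i hi him => hshift i hi (by omega)
  have hX1Q : Commute (X 1 : A) Q := by
    rw [hQ]
    refine Commute.list_prod_right _ _ ?_
    simp only [List.mem_map]
    rintro _ ⟨j, -, rfl⟩
    exact hX1 j
  have hcancel : (Q : A) * (p * X (m + 1)) = Q * (q • (X 1 : A) * p) := by
    calc (Q : A) * (p * X (m + 1))
        = p * ((List.range' 1 (m + 1)).map fun i => (X i : A)).prod := by
          rw [hback, ← mul_assoc, ← mul_assoc, hpQ.eq]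
      _ = q • ((X 1 : A) * Q) * p := by rw [hprod.eq, hfront]
      _ = Q * (q • (X 1 : A) * p) := by
          rw [hX1Q.eq, smul_mul_assoc, smul_mul_assoc, mul_smul_comm, mul_assoc]
  exact (Units.mul_right_inj Q).mp hcancel

end ShiftOperator

theorem daha_omega_cross_relation_general
    {K : Type*} [Field K] {A : Type*} [Ring A] [Algebra K A]
    (q t : K) (ht : t ≠ 0) (n : ℕ)
    (T X Y : ℕ → Aˣ)
    -- (i): quadratic, braid, and distant-commutation relations for the `T i`
    (hbraid : ∀ i, 1 ≤ i → i + 1 ≤ n - 1 →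
      (T i : A) * (T (i + 1) : A) * (T i : A) = (T (i + 1) : A) * (T i : A) * (T (i + 1) : A))
    (hTT : ∀ i j, 1 ≤ i → i ≤ n - 1 → 1 ≤ j → j ≤ n - 1 → i + 1 < j →
      Commute (T i : A) (T j : A))
    -- (ii): relations between the `T i` and the `X j`
    (hTXT : ∀ i, 1 ≤ i → i ≤ n - 1 →
      (↑(T i)⁻¹ : A) * (X i : A) * (↑(T i)⁻¹ : A) = t⁻¹ • (X (i + 1) : A))
    (hTX : ∀ i j, 1 ≤ i → i ≤ n - 1 → 1 ≤ j → j ≤ n → j ≠ i → j ≠ i + 1 →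
      Commute (T i : A) (X j : A))
    (hXX : ∀ i j, Commute (X i : A) (X j : A))
    -- (iii): relations between the `T i` and the `Y j`
    (hTY : ∀ i j, 1 ≤ i → i ≤ n - 1 → 1 ≤ j → j ≤ n → j ≠ i → j ≠ i + 1 →
      Commute (T i : A) (Y j : A))
    -- (iv)
    (hXY : (Y 1 : A) * (T 1 : A) * (X 1 : A) = (X 2 : A) * (Y 1 : A) * (T 1 : A))
    -- (v)
    (hYX : (Y 1 : A) * ((List.range' 1 n).map (fun i => (X i : A))).prod =
      q • (((List.range' 1 n).map (fun i => (X i : A))).prod * (Y 1 : A)))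
    (r : ℕ) (hr1 : 1 ≤ r) (hr2 : r ≤ n - 1) :
    ((Y 1 * ascT T 1 n : Aˣ) : A) * ((ascT T r n)⁻¹ : Aˣ) * (X r : A) =
      (q * t⁻¹ ^ (n - r)) •
        ((X 1 : A) * ((Y 1 * ascT T 1 n : Aˣ) : A) * (descT T r n : A)) := by
  have hX : ∀ i, 1 ≤ i → i < n → (X (i + 1) : A) = t • (↑(T i)⁻¹ * X i * ↑(T i)⁻¹) :=
    fun i hi hin => by rw [hTXT i hi (by omega), smul_smul, mul_inv_cancel₀ ht, one_smul]
  have hωT : ∀ i, 1 ≤ i → i + 2 ≤ n →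
      SemiconjBy ((Y 1 * ascT T 1 n : Aˣ) : A) (T i) (T (i + 1)) := fun i hi hin =>
    SemiconjBy.mul_left
      (hTY (i + 1) 1 (by omega) (by omega) le_rfl (by omega) (by omega) (by omega)).symm
      (semiconjBy_ascT T hi hin (hbraid i hi (by omega))
        fun j k hj hjk hk => hTT j k hj (by omega) (by omega) (by omega) hjk)
  have hωX := semiconjBy_X_of_semiconjBy_T t T (fun i => (X i : A)) hX hωT
    (semiconjBy_mul_ascT_X T (Y 1) (by omega) hXY
      fun j hj hjn => hTX j 1 (by omega) (by omega) le_rfl (by omega) (by omega) (by omega))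
  have hTP : ∀ i, 1 ≤ i → i < n →
      Commute (T i : A) ((List.range' 1 n).map fun i => (X i : A)).prod := fun i hi hin =>
    Commute.prod_range'_of_pair hi (by omega)
      (commute_mul_of_eq_smul t (hX i hi hin) (hXX i (i + 1)))
      fun j hj hjn hji hji' => hTX i j hi (by omega) hj (by omega) hji hji'
  have hYP : SemiconjBy (Y 1 : A) ((List.range' 1 n).map fun i => (X i : A)).prod
      (q • ((List.range' 1 n).map fun i => (X i : A)).prod) := by
    rw [SemiconjBy, smul_mul_assoc]
    exact hYX
  have hωP := hYP.mul_left (commute_ascT T hTP)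
  have hωXn := semiconjBy_last_of_semiconjBy_prod q X (by omega) (hXX 1) hωX hωP
  calc ((Y 1 * ascT T 1 n : Aˣ) : A) * ((ascT T r n)⁻¹ : Aˣ) * (X r : A)
      = ((Y 1 * ascT T 1 n : Aˣ) : A) * (t⁻¹ ^ (n - r) • ((X n : A) * descT T r n)) := by
        rw [mul_assoc, inv_ascT_mul_eq_smul t⁻¹ T (fun i => (X i : A)) (by omega)
          fun i hi hin => hTXT i (by omega) (by omega)]
    _ = (q * t⁻¹ ^ (n - r)) •
        ((X 1 : A) * ((Y 1 * ascT T 1 n : Aˣ) : A) * (descT T r n : A)) := by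
        rw [mul_smul_comm, ← mul_assoc, hωXn.eq, smul_mul_assoc, smul_mul_assoc, smul_smul,
          mul_comm]

/-- In the double affine Hecke algebra `H_n` (here: any algebra `A` over a
field `K` ∋ `q, t`, `t ≠ 0`, with invertible elements `T 1, …, T (n-1)`, `X 1, …, X n`,
`Y 1, …, Y n` satisfying the DAHA relations), the element
`ω_n = T (n-1)⁻¹ ⋯ T 1⁻¹ Y 1⁻¹` satisfies, for `1 ≤ r ≤ n-1`,
`ω_n⁻¹ T (n-1)⁻¹ ⋯ T r⁻¹ X r = q t^{-(n-r)} X 1 ω_n⁻¹ T (n-1) ⋯ T r`.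
(Note `ω_n⁻¹ = Y 1 · T 1 ⋯ T (n-1)` and `T (n-1)⁻¹ ⋯ T r⁻¹ = (T r ⋯ T (n-1))⁻¹`.) -/
theorem daha_omega_cross_relation
    {K : Type*} [Field K] {A : Type*} [Ring A] [Algebra K A]
    (q t : K) (ht : t ≠ 0) (n : ℕ) (hn : 2 ≤ n)
    (T X Y : ℕ → Aˣ)
    -- (i): quadratic, braid, and distant-commutation relations for the `T i`
    (hquad : ∀ i, 1 ≤ i → i ≤ n - 1 →
      ((T i : A) - 1) * ((T i : A) + algebraMap K A t) = 0)
    (hbraid : ∀ i, 1 ≤ i → i + 1 ≤ n - 1 →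
      (T i : A) * (T (i + 1) : A) * (T i : A) = (T (i + 1) : A) * (T i : A) * (T (i + 1) : A))
    (hTT : ∀ i j, 1 ≤ i → i ≤ n - 1 → 1 ≤ j → j ≤ n - 1 → i + 1 < j →
      Commute (T i : A) (T j : A))
    -- (ii): relations between the `T i` and the `X j`
    (hTXT : ∀ i, 1 ≤ i → i ≤ n - 1 →
      (↑(T i)⁻¹ : A) * (X i : A) * (↑(T i)⁻¹ : A) = t⁻¹ • (X (i + 1) : A))
    (hTX : ∀ i j, 1 ≤ i → i ≤ n - 1 → 1 ≤ j → j ≤ n → j ≠ i → j ≠ i + 1 →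
      Commute (T i : A) (X j : A))
    (hXX : ∀ i j, Commute (X i : A) (X j : A))
    -- (iii): relations between the `T i` and the `Y j`
    (hTYT : ∀ i, 1 ≤ i → i ≤ n - 1 →
      (T i : A) * (Y i : A) * (T i : A) = t • (Y (i + 1) : A))
    (hTY : ∀ i j, 1 ≤ i → i ≤ n - 1 → 1 ≤ j → j ≤ n → j ≠ i → j ≠ i + 1 →
      Commute (T i : A) (Y j : A))
    (hYY : ∀ i j, Commute (Y i : A) (Y j : A))
    -- (iv)
    (hXY : (Y 1 : A) * (T 1 : A) * (X 1 : A) = (X 2 : A) * (Y 1 : A) * (T 1 : A))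
    -- (v)
    (hYX : (Y 1 : A) * ((List.range' 1 n).map (fun i => (X i : A))).prod =
      q • (((List.range' 1 n).map (fun i => (X i : A))).prod * (Y 1 : A)))
    (r : ℕ) (hr1 : 1 ≤ r) (hr2 : r ≤ n - 1) :
    ((Y 1 * ascT T 1 n : Aˣ) : A) * ((ascT T r n)⁻¹ : Aˣ) * (X r : A) =
      (q * t⁻¹ ^ (n - r)) •
        ((X 1 : A) * ((Y 1 * ascT T 1 n : Aˣ) : A) * (descT T r n : A)) :=
  daha_omega_cross_relation_general q t ht n T X Y hbraid hTT hTXT hTX hXX hTY hXY hYX r hr1 hr2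
end
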